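/- Let (Ω_d, ρ_d, μ_d) be a normal Lévy family (α_d(ε) ≤ C·e^{−c·ε²·d}), with median pairwise distance M_d satisfying c₁ < M_d < c₂ for fixed constants 0 < c₁ < c₂, and let X_d be i.i.d. samples of size n_d = d^{o(1)}. If m_d denotes the median of the function ω ↦ dist(ω, X_d) (distance to nearest neighbor in the sample), then there exist c₃ > 0 and D such that m_d > c₃ for all d ≥ D. -/

import Mathlib

open MeasureTheory Metric Filter

/-- The concentration function of a metric probability space:
`α(ε) = sup {1 − μ(A_ε) : A measurable, μ(A) ≥ 1/2}`. -/
noncomputable def concentrationFunction {Ω : Type*} [PseudoMetricSpace Ω]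
    [MeasurableSpace Ω] (μ : Measure Ω) (ε : ℝ) : ℝ :=
  sSup {v : ℝ | ∃ A : Set Ω, MeasurableSet A ∧ (1 : ℝ) / 2 ≤ (μ A).toReal ∧
    v = 1 - (μ (thickening ε A)).toReal}

lemma toReal_compl_aux {Ω : Type*} [MeasurableSpace Ω] (μ : Measure Ω)
    [IsProbabilityMeasure μ] {S : Set Ω} (hS : MeasurableSet S) :
    (μ Sᶜ).toReal = 1 - (μ S).toReal := by
  rw [prob_compl_eq_one_sub hS, ENNReal.toReal_sub_of_le prob_le_one (by simp)]
  simp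

lemma conc_lower_aux {Ω : Type*} [PseudoMetricSpace Ω] [MeasurableSpace Ω]
    (μ : Measure Ω) [IsProbabilityMeasure μ] (ε : ℝ) (A : Set Ω)
    (hA : MeasurableSet A) (hA2 : (1:ℝ)/2 ≤ (μ A).toReal) :
    1 - (μ (thickening ε A)).toReal ≤ concentrationFunction μ ε := by
  apply le_csSup
  · refine ⟨1, ?_⟩
    rintro v ⟨B, _, _, rfl⟩
    have : 0 ≤ (μ (thickening ε B)).toReal := ENNReal.toReal_nonneg
    linarith
  · exact ⟨A, hA, hA2, rfl⟩

lemma ball_small_aux {Ω : Type*} [MetricSpace Ω] [MeasurableSpace Ω] [BorelSpace Ω]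
    (μ : Measure Ω) [IsProbabilityMeasure μ] (ε M b : ℝ) (hε : 0 < ε)
    (hconc : ∀ A : Set Ω, MeasurableSet A → (1:ℝ)/2 ≤ (μ A).toReal →
        1 - (μ (thickening ε A)).toReal ≤ b)
    (hb : b < 1/4)
    (hM6 : 6 * ε < M)
    (hMhigh : (1:ℝ)/2 ≤ ((μ.prod μ) {p : Ω × Ω | M ≤ dist p.1 p.2}).toReal)
    (x : Ω) : (μ (ball x ε)).toReal ≤ b := by
  by_contra h
  push_neg at h
  -- Step A: the `ε`-thickening of the ball has measure ≥ 1/2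
  set T : Set Ω := thickening ε (ball x ε) with hT
  have hTmeas : MeasurableSet T := isOpen_thickening.measurableSet
  have hT2 : (1:ℝ)/2 ≤ (μ T).toReal := by
    by_contra hT2
    push_neg at hT2
    have hW2 : (1:ℝ)/2 ≤ (μ Tᶜ).toReal := by
      rw [toReal_compl_aux μ hTmeas]; linarith
    have hcw := hconc Tᶜ hTmeas.compl hW2
    have hsub : ball x ε ⊆ (thickening ε Tᶜ)ᶜ := by
      intro y hy hthick
      rw [mem_thickening_iff] at hthick
      obtain ⟨w, hwW, hdw⟩ := hthick
      exact hwW (mem_thickening_iff.2 ⟨y, hy, by rwa [dist_comm]⟩)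
    have hmono : (μ (ball x ε)).toReal ≤ (μ (thickening ε Tᶜ)ᶜ).toReal :=
      ENNReal.toReal_mono (measure_ne_top _ _) (measure_mono hsub)
    rw [toReal_compl_aux μ isOpen_thickening.measurableSet] at hmono
    linarith
  -- Step B: the ball of radius 3ε has measure > 3/4
  have hcT := hconc T hTmeas hT2
  have hsub3 : thickening ε T ⊆ ball x (3 * ε) := by
    intro y hy
    rw [mem_thickening_iff] at hy
    obtain ⟨t, htT, hdt⟩ := hy
    rw [hT, mem_thickening_iff] at htT
    obtain ⟨z, hz, hdz⟩ := htT
    rw [mem_ball] at hz ⊢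
    calc dist y x ≤ dist y t + dist t z + dist z x := dist_triangle4 y t z x
    _ < ε + ε + ε := add_lt_add (add_lt_add hdt hdz) hz
    _ = 3 * ε := by ring
  have h34 : (3:ℝ)/4 < (μ (ball x (3 * ε))).toReal := by
    have hmono : (μ (thickening ε T)).toReal ≤ (μ (ball x (3 * ε))).toReal :=
      ENNReal.toReal_mono (measure_ne_top _ _) (measure_mono hsub3)
    linarith
  -- Step C: contradiction with the pairwise distance median
  set B3 : Set Ω := ball x (3 * ε) with hB3
  have hsubP : {p : Ω × Ω | M ≤ dist p.1 p.2} ⊆ (B3 ×ˢ B3)ᶜ := by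
    rintro ⟨p, q⟩ hpq hmem
    obtain ⟨hp, hq⟩ := hmem
    rw [hB3] at hp hq
    rw [mem_ball] at hp hq
    have h1 : dist p q ≤ dist p x + dist q x := dist_triangle_right p q x
    have hMd : M ≤ dist p q := hpq
    linarith
  have hprod : ((μ.prod μ) (B3 ×ˢ B3)).toReal
      = (μ B3).toReal * (μ B3).toReal := by
    rw [Measure.prod_prod, ENNReal.toReal_mul]
  have hmeasB3 : MeasurableSet (B3 ×ˢ B3) :=
    measurableSet_ball.prod measurableSet_ball
  have hmono : ((μ.prod μ) {p : Ω × Ω | M ≤ dist p.1 p.2}).toReal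
      ≤ ((μ.prod μ) (B3 ×ˢ B3)ᶜ).toReal :=
    ENNReal.toReal_mono (measure_ne_top _ _) (measure_mono hsubP)
  rw [toReal_compl_aux (μ.prod μ) hmeasB3, hprod] at hmono
  have hle1 : (μ B3).toReal ≤ 1 := by
    have h := prob_le_one (μ := μ) (s := B3)
    have := ENNReal.toReal_mono (by simp) h
    simpa using this
  nlinarith

/-- In a normal Lévy family whose median pairwise distance is bounded between two
positive constants, if the sample sizes `n_d` grow subpolynomially in `d`
(`n_d = d^{o(1)}`), then the median nearest-neighbour distance `m_d` to the
sample is eventually bounded away from 0. -/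
theorem median_nn_distance_bounded_below
    (Ω : ℕ → Type*) [∀ d, MetricSpace (Ω d)] [∀ d, MeasurableSpace (Ω d)]
    [∀ d, BorelSpace (Ω d)]
    (μ : ∀ d, Measure (Ω d)) [∀ d, IsProbabilityMeasure (μ d)]
    -- normal Lévy family
    (C c : ℝ) (hC : 0 < C) (hc : 0 < c)
    (hLevy : ∀ d : ℕ, ∀ ε > (0 : ℝ),
      concentrationFunction (μ d) ε ≤ C * Real.exp (-c * ε ^ 2 * d))
    -- median pairwise distance, bounded between c₁ and c₂
    (M : ℕ → ℝ) (c₁ c₂ : ℝ) (hc₁ : 0 < c₁) (hc₁c₂ : c₁ < c₂)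
    (hMlow : ∀ d, (1 : ℝ) / 2 ≤ (((μ d).prod (μ d)) {p | dist p.1 p.2 ≤ M d}).toReal)
    (hMhigh : ∀ d, (1 : ℝ) / 2 ≤ (((μ d).prod (μ d)) {p | M d ≤ dist p.1 p.2}).toReal)
    (hM : ∀ d, c₁ < M d ∧ M d < c₂)
    -- the samples and their sizes, n_d = d^{o(1)}
    (X : ∀ d, Finset (Ω d)) (hXne : ∀ d, (X d).Nonempty) (n : ℕ → ℕ)
    (hcard : ∀ d, (X d).card = n d)
    (hn : ∀ β > (0 : ℝ), ∀ᶠ d in atTop, (n d : ℝ) ≤ (d : ℝ) ^ β)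
    -- m_d is a median of the nearest-neighbour distance ω ↦ dist(ω, X_d)
    (m : ℕ → ℝ)
    (hmlow : ∀ d, (1 : ℝ) / 2 ≤ ((μ d) {ω | infDist ω (X d : Set (Ω d)) ≤ m d}).toReal)
    (hmhigh : ∀ d, (1 : ℝ) / 2 ≤ ((μ d) {ω | m d ≤ infDist ω (X d : Set (Ω d))}).toReal) :
    ∃ c₃ > (0 : ℝ), ∃ D : ℕ, ∀ d ≥ D, m d > c₃ := by
  set ε : ℝ := c₁ / 8 with hεdef
  have hε : 0 < ε := by positivity
  set γ : ℝ := c * ε ^ 2 with hγdef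
  have hγ : 0 < γ := by positivity
  set b : ℕ → ℝ := fun d => C * Real.exp (-c * ε ^ 2 * d) with hbdef
  -- d * b d tends to 0
  have hdb0 : Tendsto (fun d : ℕ => (d : ℝ) * b d) atTop (nhds 0) := by
    have h1 : Tendsto (fun y : ℝ => γ * y) atTop atTop :=
      Tendsto.const_mul_atTop hγ tendsto_id
    have h2 := (Real.tendsto_pow_mul_exp_neg_atTop_nhds_zero 1).comp h1
    have h3 : Tendsto (fun y : ℝ => (C / γ) * ((γ * y) ^ 1 * Real.exp (-(γ * y))))
        atTop (nhds ((C / γ) * 0)) := h2.const_mul _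
    rw [mul_zero] at h3
    have h4 := h3.comp (tendsto_natCast_atTop_atTop (R := ℝ))
    refine h4.congr fun d => ?_
    simp only [Function.comp_apply, pow_one, hbdef, hγdef]
    field_simp
  -- b tends to 0
  have hb0 : Tendsto b atTop (nhds 0) := by
    have h1 : Tendsto (fun d : ℕ => γ * (d : ℝ)) atTop atTop :=
      Tendsto.const_mul_atTop hγ (tendsto_natCast_atTop_atTop (R := ℝ))
    have h2 : Tendsto (fun d : ℕ => -(γ * (d : ℝ))) atTop atBot :=
      tendsto_neg_atTop_atBot.comp h1
    have h3 := (Real.tendsto_exp_atBot.comp h2).const_mul C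
    rw [mul_zero] at h3
    refine h3.congr fun d => ?_
    simp only [Function.comp_apply, hbdef, hγdef]
    ring_nf
  have hballs : ∀ᶠ d in atTop, b d < 1/4 :=
    hb0.eventually (eventually_lt_nhds (by norm_num : (0:ℝ) < 1/4))
  have hsmall : ∀ᶠ d in atTop, (n d : ℝ) * b d < 1/2 := by
    have hev := hn 1 one_pos
    have h2 := hdb0.eventually (eventually_lt_nhds (by norm_num : (0:ℝ) < 1/2))
    filter_upwards [hev, h2] with d hd1 hd2
    have hbnn : 0 ≤ b d := by positivity
    have hnd : (n d : ℝ) ≤ (d : ℝ) := by simpa using hd1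
    have hmul := mul_le_mul_of_nonneg_right hnd hbnn
    linarith
  obtain ⟨D, hD⟩ := eventually_atTop.1 (hballs.and hsmall)
  refine ⟨c₁/16, by positivity, D, fun d hd => ?_⟩
  obtain ⟨hb14, hnb⟩ := hD d hd
  by_contra hmd
  push_neg at hmd
  have hball_le : ∀ x : Ω d, ((μ d) (ball x ε)).toReal ≤ b d := by
    intro x
    refine ball_small_aux (μ d) ε (M d) (b d) hε ?_ hb14 ?_ (hMhigh d) x
    · intro A hA hA2
      exact (conc_lower_aux (μ d) ε A hA hA2).trans (hLevy d ε hε)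
    · have := (hM d).1
      rw [hεdef]; linarith
  set S := {ω : Ω d | infDist ω (X d : Set (Ω d)) ≤ m d} with hS
  have hsub : S ⊆ ⋃ x ∈ (X d), ball x ε := by
    intro ω hω
    have hne : ((X d) : Set (Ω d)).Nonempty := by
      obtain ⟨x, hx⟩ := hXne d
      exact ⟨x, by exact_mod_cast hx⟩
    have hlt : infDist ω ((X d) : Set (Ω d)) < ε := by
      have : infDist ω ((X d) : Set (Ω d)) ≤ m d := hω
      rw [hεdef]; linarith
    obtain ⟨y, hy, hdy⟩ := (infDist_lt_iff hne).1 hlt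
    exact Set.mem_biUnion hy (mem_ball.2 hdy)
  have h1 : (μ d) S ≤ ∑ x ∈ X d, (μ d) (ball x ε) :=
    le_trans (measure_mono hsub) (measure_biUnion_finset_le _ _)
  have hfin : (∑ x ∈ X d, (μ d) (ball x ε)) ≠ ⊤ := by
    refine ne_of_lt (lt_of_le_of_lt (Finset.sum_le_sum fun x _ => prob_le_one) ?_)
    simp only [Finset.sum_const, nsmul_eq_mul, mul_one]
    exact ENNReal.natCast_lt_top _
  have h2 : ((μ d) S).toReal ≤ (∑ x ∈ X d, (μ d) (ball x ε)).toReal :=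
    ENNReal.toReal_mono hfin h1
  rw [ENNReal.toReal_sum (fun x _ => measure_ne_top _ _)] at h2
  have h3 : (∑ x ∈ X d, ((μ d) (ball x ε)).toReal) ≤ (n d : ℝ) * b d := by
    calc (∑ x ∈ X d, ((μ d) (ball x ε)).toReal)
        ≤ ∑ _x ∈ X d, b d := Finset.sum_le_sum fun x _ => hball_le x
      _ = ((X d).card : ℝ) * b d := by rw [Finset.sum_const, nsmul_eq_mul]
      _ = (n d : ℝ) * b d := by rw [hcard d]
  have := hmlow d
  rw [← hS] at this
  linarith
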